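/- arXiv:2604.23894 — 9 statements merged into one kernel-verified Lean document; each statement's English description precedes it below -/
import Mathlib

section
/- For all natural numbers m, n with m ≥ 2 and n ≥ 2, and for every set S of cells of the m × n grid with S ≠ the full set of cells, there exist two colorings c₀, c₁ : Fin m × Fin n → Fin 4 that agree on every cell in S, such that the grid graph of c₀ contains a cycle and the grid graph of c₁ is acyclic. -/
open SimpleGraph

/-- The grid graph of a coloring `c`: cells at Manhattan distance 1
(on the underlying natural-number coordinates) with equal colors are adjacent. -/
def gridGraph {m n : ℕ} {α : Type*} (c : Fin m × Fin n → α) :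
    SimpleGraph (Fin m × Fin n) where
  Adj x y := Nat.dist x.1.val y.1.val + Nat.dist x.2.val y.2.val = 1 ∧ c x = c y
  symm := by
    constructor
    intro x y ⟨h, hc⟩
    refine ⟨?_, hc.symm⟩
    rwa [Nat.dist_comm y.1.val, Nat.dist_comm y.2.val]
  loopless := by
    constructor
    intro x ⟨h, _⟩
    simp [Nat.dist_self] at h

lemma star_acyclic' {V : Type*} {G : SimpleGraph V} (v : V)
    (h : ∀ x y, G.Adj x y → x = v ∨ y = v) : G.IsAcyclic := by
  classical
  intro u c hc
  have hv : v ∈ c.support := by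
    cases c with
    | nil => exact absurd hc (by simp [Walk.IsCycle])
    | cons hadj q =>
      rcases h _ _ hadj with h1 | h2
      · rw [← h1]; exact Walk.start_mem_support _
      · rw [Walk.support_cons]; exact List.mem_cons_of_mem _ (h2 ▸ q.start_mem_support)
  have hc' := hc.rotate hv
  have h3 := hc'.three_le_length
  have hnd := hc'.support_nodup
  revert h3 hnd
  generalize c.rotate v hv = d
  intro h3 hnd
  cases d with
  | nil => simp at h3
  | cons hadj q =>
    cases q with
    | nil => exact G.loopless.irrefl _ hadj
    | cons hadj2 q2 =>
      rcases h _ _ hadj2 with h1 | h2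
      · exact hadj.ne' h1
      · subst h2
        cases q2 with
        | nil => simp [Walk.length_cons] at h3
        | cons hadj3 q3 =>
          simp only [Walk.support_cons, List.tail_cons, List.nodup_cons] at hnd
          exact hnd.2.1 (by simpa using q3.end_mem_support)

/-- If a coloring is constant (say `2`) on a 2×2 block, the grid graph has a cycle. -/
lemma gridGraph_block_not_acyclic (m n r s : ℕ) (hr1 : r + 1 < m) (hs1 : s + 1 < n)
    (c : Fin m × Fin n → Fin 4)
    (hc : ∀ x : Fin m × Fin n,
      (x.1.val = r ∨ x.1.val = r + 1) ∧ (x.2.val = s ∨ x.2.val = s + 1) → c x = 2) :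
    ¬ (gridGraph c).IsAcyclic := by
  intro hac
  set A : Fin m × Fin n := (⟨r, by omega⟩, ⟨s, by omega⟩) with hA
  set B : Fin m × Fin n := (⟨r, by omega⟩, ⟨s + 1, hs1⟩) with hB
  set C : Fin m × Fin n := (⟨r + 1, hr1⟩, ⟨s + 1, hs1⟩) with hC
  set D : Fin m × Fin n := (⟨r + 1, hr1⟩, ⟨s, by omega⟩) with hD
  have hcolA : c A = 2 := hc A (by simp [hA])
  have hcolB : c B = 2 := hc B (by simp [hB])
  have hcolC : c C = 2 := hc C (by simp [hC])
  have hcolD : c D = 2 := hc D (by simp [hD])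
  have hAB : (gridGraph c).Adj A B := by
    refine ⟨?_, by rw [hcolA, hcolB]⟩
    simp [hA, hB, Nat.dist]
  have hBC : (gridGraph c).Adj B C := by
    refine ⟨?_, by rw [hcolB, hcolC]⟩
    simp [hB, hC, Nat.dist]
  have hCD : (gridGraph c).Adj C D := by
    refine ⟨?_, by rw [hcolC, hcolD]⟩
    simp [hC, hD, Nat.dist]
  have hDA : (gridGraph c).Adj D A := by
    refine ⟨?_, by rw [hcolD, hcolA]⟩
    simp [hD, hA, Nat.dist]
  set w : (gridGraph c).Walk A A :=
    Walk.cons hAB (Walk.cons hBC (Walk.cons hCD (Walk.cons hDA Walk.nil))) with hw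
  have hwc : w.IsCycle := by
    rw [Walk.isCycle_def]
    refine ⟨?_, by simp [hw], ?_⟩
    · rw [Walk.isTrail_def]
      simp [hw, hA, hB, hC, hD, Sym2.eq_iff, Prod.ext_iff, Fin.ext_iff] <;> omega
    · simp [hw, hA, hB, hC, hD, Prod.ext_iff, Fin.ext_iff] <;> omega
  exact hac w hwc

/-- The modified coloring (block colored 2, cell `(i,j)` recolored 3, checkerboard
elsewhere) has an acyclic grid graph: all its edges contain the corner opposite `(i,j)`. -/
lemma gridGraph_modified_acyclic (m n r s i j : ℕ) (hi : i < m) (hj : j < n)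
    (hr1 : r + 1 < m) (hs1 : s + 1 < n) (hir : i = r ∨ i = r + 1) (hjs : j = s ∨ j = s + 1) :
    (gridGraph (fun x : Fin m × Fin n =>
      if x = (⟨i, hi⟩, ⟨j, hj⟩) then (3 : Fin 4)
      else if (x.1.val = r ∨ x.1.val = r + 1) ∧ (x.2.val = s ∨ x.2.val = s + 1) then 2
      else ⟨(x.1.val + x.2.val) % 2, by omega⟩)).IsAcyclic := by
  set P : Fin m × Fin n := (⟨i, hi⟩, ⟨j, hj⟩) with hP
  set c : Fin m × Fin n → Fin 4 := fun x =>
      if x = P then (3 : Fin 4)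
      else if (x.1.val = r ∨ x.1.val = r + 1) ∧ (x.2.val = s ∨ x.2.val = s + 1) then 2
      else ⟨(x.1.val + x.2.val) % 2, by omega⟩ with hcdef
  apply star_acyclic' ((⟨2 * r + 1 - i, by omega⟩, ⟨2 * s + 1 - j, by omega⟩) : Fin m × Fin n)
  have colP : (c P).val = 3 := by simp only [hcdef, if_pos rfl]; rfl
  have colB : ∀ z : Fin m × Fin n, z ≠ P →
      ((z.1.val = r ∨ z.1.val = r + 1) ∧ (z.2.val = s ∨ z.2.val = s + 1)) →
      (c z).val = 2 := by
    intro z hz hb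
    simp only [hcdef, if_neg hz, if_pos hb]; rfl
  have colO : ∀ z : Fin m × Fin n, z ≠ P →
      ¬((z.1.val = r ∨ z.1.val = r + 1) ∧ (z.2.val = s ∨ z.2.val = s + 1)) →
      (c z).val = (z.1.val + z.2.val) % 2 := by
    intro z hz hb
    simp only [hcdef, if_neg hz, if_neg hb]
  rintro x y ⟨hd, hcol⟩
  have hvals := congrArg Fin.val hcol
  simp only [Nat.dist] at hd
  rcases eq_or_ne x P with hxP | hxP
  · rcases eq_or_ne y P with hyP | hyP
    · rw [hxP, hyP] at hd; omega
    · rw [hxP, colP] at hvals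
      by_cases hyB : (y.1.val = r ∨ y.1.val = r + 1) ∧ (y.2.val = s ∨ y.2.val = s + 1)
      · rw [colB y hyP hyB] at hvals; omega
      · rw [colO y hyP hyB] at hvals; omega
  · rcases eq_or_ne y P with hyP | hyP
    · rw [hyP, colP] at hvals
      by_cases hxB : (x.1.val = r ∨ x.1.val = r + 1) ∧ (x.2.val = s ∨ x.2.val = s + 1)
      · rw [colB x hxP hxB] at hvals; omega
      · rw [colO x hxP hxB] at hvals; omega
    · by_cases hxB : (x.1.val = r ∨ x.1.val = r + 1) ∧ (x.2.val = s ∨ x.2.val = s + 1) <;>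
      by_cases hyB : (y.1.val = r ∨ y.1.val = r + 1) ∧ (y.2.val = s ∨ y.2.val = s + 1)
      · -- both in the block: conclude x or y is the opposite corner
        have hxP' : ¬(x.1.val = i ∧ x.2.val = j) := fun h =>
          hxP (Prod.ext_iff.mpr ⟨Fin.ext h.1, Fin.ext h.2⟩)
        have hyP' : ¬(y.1.val = i ∧ y.2.val = j) := fun h =>
          hyP (Prod.ext_iff.mpr ⟨Fin.ext h.1, Fin.ext h.2⟩)
        simp only [Prod.ext_iff, Fin.ext_iff]
        obtain ⟨ha | ha, hb | hb⟩ := hxB <;> obtain ⟨hc' | hc', he | he⟩ := hyB <;>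
          rcases hir with hf | hf <;> rcases hjs with hg | hg <;> omega
      · rw [colB x hxP hxB, colO y hyP hyB] at hvals; omega
      · rw [colO x hxP hxB, colB y hyP hyB] at hvals; omega
      · rw [colO x hxP hxB, colO y hyP hyB] at hvals; omega

/-- Static indistinguishability form of the main theorem: for any proper subset
`S` of cells of an `m × n` grid (`m, n ≥ 2`), there are two 4-colorings agreeing
on `S`, one whose grid graph has a cycle and one whose grid graph is acyclic. -/
theorem stmt_0 (m n : ℕ) (hm : 2 ≤ m) (hn : 2 ≤ n)
    (S : Set (Fin m × Fin n)) (hS : S ≠ Set.univ) :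
    ∃ c₀ c₁ : Fin m × Fin n → Fin 4,
      (∀ x ∈ S, c₀ x = c₁ x) ∧
      ¬ (gridGraph c₀).IsAcyclic ∧ (gridGraph c₁).IsAcyclic := by
  classical
  obtain ⟨p, hp⟩ : ∃ p, p ∉ S := by
    by_contra h
    push_neg at h
    exact hS (Set.eq_univ_iff_forall.2 h)
  obtain ⟨⟨i, hi⟩, ⟨j, hj⟩⟩ := p
  obtain ⟨r, hr1, hir⟩ : ∃ r, r + 1 < m ∧ (i = r ∨ i = r + 1) :=
    ⟨min i (m - 2), by omega, by omega⟩
  obtain ⟨s, hs1, hjs⟩ : ∃ s, s + 1 < n ∧ (j = s ∨ j = s + 1) :=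
    ⟨min j (n - 2), by omega, by omega⟩
  refine ⟨fun x =>
      if (x.1.val = r ∨ x.1.val = r + 1) ∧ (x.2.val = s ∨ x.2.val = s + 1) then 2
      else ⟨(x.1.val + x.2.val) % 2, by omega⟩,
    fun x =>
      if x = (⟨i, hi⟩, ⟨j, hj⟩) then (3 : Fin 4)
      else if (x.1.val = r ∨ x.1.val = r + 1) ∧ (x.2.val = s ∨ x.2.val = s + 1) then 2
      else ⟨(x.1.val + x.2.val) % 2, by omega⟩, ?_, ?_, ?_⟩
  · intro x hx
    have hxp : x ≠ (⟨i, hi⟩, ⟨j, hj⟩) := fun h => hp (h ▸ hx)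
    exact (if_neg hxp).symm
  · exact gridGraph_block_not_acyclic m n r s hr1 hs1 _ (fun x hx => if_pos hx)
  · exact gridGraph_modified_acyclic m n r s i j hi hj hr1 hs1 hir hjs
end

section
/- For all natural numbers m, n with m ≥ 2 and n ≥ 2, and for every cell p of the m × n grid, there exist two colorings c₀, c₁ : Fin m × Fin n → Fin 4 that agree on every cell other than p, such that the grid graph of c₀ contains a cycle and the grid graph of c₁ is acyclic. -/
lemma aux_nodup_two {α : Type*} {l : List α} {e1 e2 : α} (hn : l.Nodup)
    (h : ∀ x ∈ l, x = e1 ∨ x = e2) : l.length ≤ 2 := by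
  match l, hn, h with
  | [], _, _ => simp
  | [x], _, _ => simp
  | [x, y], _, _ => simp
  | (x :: y :: z :: t), hn, h =>
    exfalso
    have hx := h x (by simp)
    have hy := h y (by simp)
    have hz := h z (by simp)
    simp [List.nodup_cons] at hn
    rcases hx with rfl | rfl <;> rcases hy with rfl | rfl <;> rcases hz with rfl | rfl <;> tauto

lemma aux_exists_adj {m : ℕ} (hm : 2 ≤ m) (a : Fin m) :
    ∃ a' : Fin m, Nat.dist a.val a'.val = 1 := by
  rcases Nat.eq_zero_or_pos a.val with h | h
  · exact ⟨⟨1, by omega⟩, by simp [Nat.dist, h]⟩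
  · exact ⟨⟨a.val - 1, by omega⟩, by simp [Nat.dist]; omega⟩

/-- Color the 2×2 square {a,a'}×{b,b'} with 0; checkerboard 1/2 elsewhere. -/
def sqColor {m n : ℕ} (a a' : Fin m) (b b' : Fin n) (x : Fin m × Fin n) : Fin 4 :=
  if (x.1 = a ∨ x.1 = a') ∧ (x.2 = b ∨ x.2 = b') then 0
  else if (x.1.val + x.2.val) % 2 = 0 then 1 else 2

lemma sqColor_ne_three {m n : ℕ} (a a' : Fin m) (b b' : Fin n) (x : Fin m × Fin n) :
    sqColor a a' b b' x ≠ 3 := by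
  unfold sqColor; split_ifs <;> decide

lemma sqColor_sq {m n : ℕ} (a a' : Fin m) (b b' : Fin n) {x : Fin m × Fin n}
    (h1 : x.1 = a ∨ x.1 = a') (h2 : x.2 = b ∨ x.2 = b') :
    sqColor a a' b b' x = 0 := by
  unfold sqColor; rw [if_pos ⟨h1, h2⟩]

/-- The pivoted coloring: square colored 0 except corner (a,b) gets 3. -/
def sqColor' {m n : ℕ} (a a' : Fin m) (b b' : Fin n) (x : Fin m × Fin n) : Fin 4 :=
  if x = (a, b) then 3 else sqColor a a' b b' x

set_option maxHeartbeats 2000000 in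
/-- Edges of the pivoted coloring's grid graph only join the three
unchanged square corners, in a path (a',b) - (a',b') - (a,b'). -/
lemma sqColor'_adj {m n : ℕ} {a a' : Fin m} {b b' : Fin n}
    (ha : Nat.dist a.val a'.val = 1) (hb : Nat.dist b.val b'.val = 1)
    {x y : Fin m × Fin n} (h : (gridGraph (sqColor' a a' b b')).Adj x y) :
    (x = (a', b) ∧ y = (a', b')) ∨ (x = (a', b') ∧ y = (a', b)) ∨
    (x = (a', b') ∧ y = (a, b')) ∨ (x = (a, b') ∧ y = (a', b')) := by
  obtain ⟨hd, hcxy⟩ := h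
  have hxy : x ≠ y := by
    rintro rfl; simp [Nat.dist_self] at hd
  have hxp : x ≠ (a, b) := by
    intro h
    have hyp : y ≠ (a, b) := fun h2 => hxy (h.trans h2.symm)
    unfold sqColor' at hcxy
    rw [if_pos h, if_neg hyp] at hcxy
    exact sqColor_ne_three a a' b b' y hcxy.symm
  have hyp : y ≠ (a, b) := by
    intro h
    unfold sqColor' at hcxy
    rw [if_pos h, if_neg hxp] at hcxy
    exact sqColor_ne_three a a' b b' x hcxy
  unfold sqColor' at hcxy
  rw [if_neg hxp, if_neg hyp] at hcxy
  by_cases hxS : (x.1 = a ∨ x.1 = a') ∧ (x.2 = b ∨ x.2 = b') <;>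
  by_cases hyS : (y.1 = a ∨ y.1 = a') ∧ (y.2 = b ∨ y.2 = b')
  · -- both in the square
    have hx4 : x = (a, b) ∨ x = (a', b) ∨ x = (a', b') ∨ x = (a, b') := by
      obtain ⟨h1 | h1, h2 | h2⟩ := hxS
      · exact Or.inl (Prod.ext h1 h2)
      · exact Or.inr (Or.inr (Or.inr (Prod.ext h1 h2)))
      · exact Or.inr (Or.inl (Prod.ext h1 h2))
      · exact Or.inr (Or.inr (Or.inl (Prod.ext h1 h2)))
    have hy4 : y = (a, b) ∨ y = (a', b) ∨ y = (a', b') ∨ y = (a, b') := by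
      obtain ⟨h1 | h1, h2 | h2⟩ := hyS
      · exact Or.inl (Prod.ext h1 h2)
      · exact Or.inr (Or.inr (Or.inr (Prod.ext h1 h2)))
      · exact Or.inr (Or.inl (Prod.ext h1 h2))
      · exact Or.inr (Or.inr (Or.inl (Prod.ext h1 h2)))
    rcases hx4 with rfl | rfl | rfl | rfl <;> rcases hy4 with rfl | rfl | rfl | rfl <;>
      simp only [Nat.dist_self, Nat.dist_comm a'.val a.val, Nat.dist_comm b'.val b.val,
        ha, hb, zero_add, add_zero] at hd hxp hyp hxy ⊢ <;>
      first
        | exact absurd rfl hxp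
        | exact absurd rfl hyp
        | exact absurd rfl hxy
        | omega
        | tauto
  · exfalso
    rw [sqColor_sq a a' b b' hxS.1 hxS.2] at hcxy
    unfold sqColor at hcxy
    rw [if_neg hyS] at hcxy
    split_ifs at hcxy <;> exact absurd hcxy (by decide)
  · exfalso
    rw [sqColor_sq a a' b b' hyS.1 hyS.2] at hcxy
    unfold sqColor at hcxy
    rw [if_neg hxS] at hcxy
    split_ifs at hcxy <;> exact absurd hcxy (by decide)
  · exfalso
    have hpar : (x.1.val + x.2.val) % 2 ≠ (y.1.val + y.2.val) % 2 := by
      simp [Nat.dist] at hd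
      omega
    unfold sqColor at hcxy
    rw [if_neg hxS, if_neg hyS] at hcxy
    split_ifs at hcxy <;> first | omega | exact absurd hcxy (by decide)

/-- Pivotal-cell form of the main theorem: every cell `p` of an `m × n` grid
(`m, n ≥ 2`) can be the deciding cell: two 4-colorings agreeing off `p`,
one cyclic and one acyclic. -/
theorem stmt_1 (m n : ℕ) (hm : 2 ≤ m) (hn : 2 ≤ n) (p : Fin m × Fin n) :
    ∃ c₀ c₁ : Fin m × Fin n → Fin 4,
      (∀ x, x ≠ p → c₀ x = c₁ x) ∧
      ¬ (gridGraph c₀).IsAcyclic ∧ (gridGraph c₁).IsAcyclic := by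
  classical
  obtain ⟨a', ha'⟩ := aux_exists_adj hm p.1
  obtain ⟨b', hb'⟩ := aux_exists_adj hn p.2
  have haa : p.1 ≠ a' := by
    intro h; rw [h] at ha'; simp [Nat.dist_self] at ha'
  have hbb : p.2 ≠ b' := by
    intro h; rw [h] at hb'; simp [Nat.dist_self] at hb'
  have hp : p = (p.1, p.2) := rfl
  refine ⟨sqColor p.1 a' p.2 b', sqColor' p.1 a' p.2 b', fun x hx => ?_, ?_, ?_⟩
  · unfold sqColor'
    rw [if_neg (by rwa [← hp])]
  · -- cycle: p → (a',p.2) → (a',b') → (p.1,b') → p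
    intro hac
    have e1 : (gridGraph (sqColor p.1 a' p.2 b')).Adj p (a', p.2) := by
      refine ⟨?_, ?_⟩
      · simp [Nat.dist_self, ha']
      · rw [sqColor_sq p.1 a' p.2 b' (x := p) (Or.inl rfl) (Or.inl rfl),
          sqColor_sq p.1 a' p.2 b' (x := (a', p.2)) (Or.inr rfl) (Or.inl rfl)]
    have e2 : (gridGraph (sqColor p.1 a' p.2 b')).Adj (a', p.2) (a', b') := by
      refine ⟨?_, ?_⟩
      · simp [Nat.dist_self, hb']
      · rw [sqColor_sq p.1 a' p.2 b' (x := (a', p.2)) (Or.inr rfl) (Or.inl rfl),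
          sqColor_sq p.1 a' p.2 b' (x := (a', b')) (Or.inr rfl) (Or.inr rfl)]
    have e3 : (gridGraph (sqColor p.1 a' p.2 b')).Adj (a', b') (p.1, b') := by
      refine ⟨?_, ?_⟩
      · simp [Nat.dist_self, Nat.dist_comm a'.val p.1.val, ha']
      · rw [sqColor_sq p.1 a' p.2 b' (x := (a', b')) (Or.inr rfl) (Or.inr rfl),
          sqColor_sq p.1 a' p.2 b' (x := (p.1, b')) (Or.inl rfl) (Or.inr rfl)]
    have e4 : (gridGraph (sqColor p.1 a' p.2 b')).Adj (p.1, b') p := by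
      refine ⟨?_, ?_⟩
      · simp [Nat.dist_self, Nat.dist_comm b'.val p.2.val, hb']
      · rw [sqColor_sq p.1 a' p.2 b' (x := (p.1, b')) (Or.inl rfl) (Or.inr rfl),
          sqColor_sq p.1 a' p.2 b' (x := p) (Or.inl rfl) (Or.inl rfl)]
    have hpq : p ≠ (a', p.2) := by rw [hp]; simp [Prod.ext_iff]; tauto
    have hpr : p ≠ (a', b') := by rw [hp]; simp [Prod.ext_iff]; tauto
    have hps : p ≠ (p.1, b') := by rw [hp]; simp [Prod.ext_iff]; tauto
    have hqr : (a', p.2) ≠ (a', b') := by simp [Prod.ext_iff]; tauto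
    have hqs : (a', p.2) ≠ (p.1, b') := by simp [Prod.ext_iff]; tauto
    have hrs : (a', b') ≠ (p.1, b') := by simp [Prod.ext_iff]; tauto
    refine hac (.cons e1 (.cons e2 (.cons e3 (.cons e4 .nil)))) ?_
    rw [SimpleGraph.Walk.isCycle_def]
    constructor
    · constructor
      · simp [Sym2.eq, Sym2.rel_iff]
        have := hpq.symm; have := hpr.symm; have := hps.symm
        have := hqr.symm; have := hqs.symm; have := hrs.symm
        tauto
    · simp
      have := hpq.symm; have := hpr.symm; have := hps.symm
      tauto
  · -- acyclicity
    intro v w hw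
    have h3 := hw.three_le_length
    have hlen : w.edges.length = w.length := SimpleGraph.Walk.length_edges w
    have hmem : ∀ e ∈ w.edges,
        e = s((a', p.2), (a', b')) ∨ e = s((a', b'), (p.1, b')) := by
      intro e he
      have hE := w.edges_subset_edgeSet he
      induction e with
      | h x y =>
        rw [SimpleGraph.mem_edgeSet] at hE
        rcases sqColor'_adj ha' hb' hE with ⟨rfl, rfl⟩ | ⟨rfl, rfl⟩ | ⟨rfl, rfl⟩ | ⟨rfl, rfl⟩
        · left; rfl
        · left; exact Sym2.eq_swap
        · right; rfl
        · right; exact Sym2.eq_swap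
    have := aux_nodup_two hw.edges_nodup hmem
    omega
end

section
/- The grid graph of a coloring c : Fin 2 × Fin 2 → α contains a cycle if and only if c is constant. -/
open SimpleGraph

private lemma color_eq_of_walk {α : Type*} (c : Fin 2 × Fin 2 → α) {u v : Fin 2 × Fin 2}
    (p : (gridGraph c).Walk u v) : c u = c v := by
  induction p with
  | nil => rfl
  | cons h _ ih => exact h.2.trans ih

private lemma parity_of_walk {α : Type*} (c : Fin 2 × Fin 2 → α) {u v : Fin 2 × Fin 2}
    (p : (gridGraph c).Walk u v) :
    (p.length + (u.1.val + u.2.val)) % 2 = (v.1.val + v.2.val) % 2 := by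
  induction p with
  | nil => simp
  | @cons a b w h q ih =>
    have hd : (1 + (a.1.val + a.2.val)) % 2 = (b.1.val + b.2.val) % 2 := by
      have key : ∀ x y : Fin 2 × Fin 2, Nat.dist x.1.val y.1.val + Nat.dist x.2.val y.2.val = 1 →
          (1 + (x.1.val + x.2.val)) % 2 = (y.1.val + y.2.val) % 2 := by decide
      exact key a b h.1
    rw [Walk.length_cons]
    omega

/-- The grid graph of a coloring of the `2 × 2` grid contains a cycle
iff the coloring is constant. -/
theorem stmt_2 {α : Type*} (c : Fin 2 × Fin 2 → α) :
    ¬ (gridGraph c).IsAcyclic ↔ ∀ x y : Fin 2 × Fin 2, c x = c y := by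
  constructor
  · intro h
    rw [IsAcyclic] at h
    push_neg at h
    obtain ⟨a, p, hp⟩ := h
    -- the cycle has even length
    have hpar := parity_of_walk c p
    have h3 := hp.three_le_length
    have hle : p.length ≤ 4 := by
      have hnd := hp.support_nodup
      have := hnd.length_le_card
      have hl : p.support.tail.length = p.length := by
        have := p.length_support
        simp [List.length_tail, this]
      simp [hl] at this
      simpa using this
    have hlen : p.length = 4 := by omega
    -- so the support tail contains all four vertices
    have hall : ∀ x : Fin 2 × Fin 2, x ∈ p.support := by
      intro x
      have hnd := hp.support_nodup
      have hl : p.support.tail.length = 4 := by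
        have := p.length_support
        simp [List.length_tail, this, hlen]
      have hcard : p.support.tail.toFinset.card = 4 := by
        rw [List.toFinset_card_of_nodup hnd, hl]
      have huniv : p.support.tail.toFinset = Finset.univ := by
        apply Finset.eq_univ_of_card
        simp [hcard]
      have : x ∈ p.support.tail.toFinset := by rw [huniv]; exact Finset.mem_univ x
      exact List.mem_of_mem_tail (List.mem_toFinset.mp this)
    intro x y
    have hx : c a = c x := color_eq_of_walk c (p.takeUntil x (hall x))
    have hy : c a = c y := color_eq_of_walk c (p.takeUntil y (hall y))
    exact hx.symm.trans hy
  · intro hc hac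
    -- build the explicit 4-cycle
    have adj : ∀ x y : Fin 2 × Fin 2,
        Nat.dist x.1.val y.1.val + Nat.dist x.2.val y.2.val = 1 → (gridGraph c).Adj x y :=
      fun x y h => ⟨h, hc x y⟩
    let w : (gridGraph c).Walk ((0, 0) : Fin 2 × Fin 2) ((0, 0) : Fin 2 × Fin 2) :=
      Walk.cons (adj (0,0) (0,1) (by decide))
        (Walk.cons (adj (0,1) (1,1) (by decide))
          (Walk.cons (adj (1,1) (1,0) (by decide))
            (Walk.cons (adj (1,0) (0,0) (by decide)) Walk.nil)))
    refine hac w ?_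
    constructor
    · constructor
      · rw [Walk.isTrail_def]
        simp only [w, Walk.edges_cons, Walk.edges_nil]
        decide
      · simp [w]
    · simp only [w, Walk.support_cons, Walk.support_nil, List.tail_cons]
      decide
end

section
/- For every cell p of the 2 × 2 grid, there exist two colorings c₀, c₁ : Fin 2 × Fin 2 → Fin 2 that agree on every cell other than p, such that the grid graph of c₀ contains a cycle and the grid graph of c₁ is acyclic. -/
instance gridGraph.adjDecidable {m n : ℕ} {α : Type*} [DecidableEq α]
    (c : Fin m × Fin n → α) : DecidableRel (gridGraph c).Adj := fun x y => by
  unfold gridGraph; infer_instance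

instance fromEdgeSetSingleton.adjDecidable {V : Type*} [DecidableEq V] (e : Sym2 V) :
    DecidableRel (SimpleGraph.fromEdgeSet {e}).Adj := fun v w =>
  decidable_of_iff (s(v, w) = e ∧ v ≠ w) (by simp [SimpleGraph.fromEdgeSet_adj])

/-- Static core of Lemma 1 (the `2 × 2` adversary): every cell `p` can be the
deciding cell. -/
theorem stmt_3 (p : Fin 2 × Fin 2) :
    ∃ c₀ c₁ : Fin 2 × Fin 2 → Fin 2,
      (∀ x, x ≠ p → c₀ x = c₁ x) ∧
      ¬ (gridGraph c₀).IsAcyclic ∧ (gridGraph c₁).IsAcyclic := by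
  refine ⟨fun _ => 0, fun x => if x = p then 1 else 0, fun x hx => by simp [hx], ?_, ?_⟩
  · intro h
    let w : (gridGraph (fun _ : Fin 2 × Fin 2 => (0:Fin 2))).Walk (0,0) (0,0) :=
      .cons (v := ((0:Fin 2),(1:Fin 2))) (by decide) <|
      .cons (v := ((1:Fin 2),(1:Fin 2))) (by decide) <|
      .cons (v := ((1:Fin 2),(0:Fin 2))) (by decide) <|
      .cons (by decide) .nil
    exact h w (by rw [SimpleGraph.Walk.isCycle_def]; exact ⟨⟨by decide⟩, by simp [w], by decide⟩)
  · rw [SimpleGraph.isAcyclic_iff_forall_adj_isBridge]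
    intro v w h
    rw [SimpleGraph.isBridge_iff]
    revert h
    fin_cases p <;> fin_cases v <;> fin_cases w <;> intro h <;>
      first
        | (exfalso; revert h; decide)
        | (intro hr; revert hr; decide)
end

section
/- Let a, b : α with a ≠ b, and let c : Fin 3 × Fin 3 → α be the coloring with c (1,1) = b and c q = a for every cell q ≠ (1,1). Then the grid graph of c contains a cycle. -/
/-- Cyclic completion of Case 1 of the `3 × 3` adversary: center `b`,
all boundary `a` — the monochromatic outer ring is a cycle. -/
theorem stmt_4 {α : Type*} (a b : α) (hab : a ≠ b) (c : Fin 3 × Fin 3 → α)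
    (hcen : c (1, 1) = b) (hbd : ∀ q : Fin 3 × Fin 3, q ≠ (1, 1) → c q = a) :
    ¬ (gridGraph c).IsAcyclic := by
  intro hac
  have adj : ∀ x y : Fin 3 × Fin 3, x ≠ (1,1) → y ≠ (1,1) →
      Nat.dist x.1.val y.1.val + Nat.dist x.2.val y.2.val = 1 →
      (gridGraph c).Adj x y := by
    intro x y hx hy hd
    exact ⟨hd, by rw [hbd x hx, hbd y hy]⟩
  let w : (gridGraph c).Walk (0,0) (0,0) :=
    .cons (adj (0,0) (0,1) (by decide) (by decide) (by decide))
      (.cons (adj (0,1) (0,2) (by decide) (by decide) (by decide))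
        (.cons (adj (0,2) (1,2) (by decide) (by decide) (by decide))
          (.cons (adj (1,2) (2,2) (by decide) (by decide) (by decide))
            (.cons (adj (2,2) (2,1) (by decide) (by decide) (by decide))
              (.cons (adj (2,1) (2,0) (by decide) (by decide) (by decide))
                (.cons (adj (2,0) (1,0) (by decide) (by decide) (by decide))
                  (.cons (adj (1,0) (0,0) (by decide) (by decide) (by decide))
                    .nil)))))))
  have hw : w.IsCycle := by
    constructor
    · constructor
      · constructor
        simp only [w, SimpleGraph.Walk.edges_cons, SimpleGraph.Walk.edges_nil]
        decide
      · simp [w]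
    · simp only [w, SimpleGraph.Walk.support_cons, SimpleGraph.Walk.support_nil, List.tail_cons]
      decide
  exact hac w hw
end

section
/- Let a, b : α with a ≠ b, let q be any cell of the 3 × 3 grid with q ≠ (1,1), and let c : Fin 3 × Fin 3 → α be the coloring with c (1,1) = b, c q = b, and c r = a for every other cell r. Then the grid graph of c is acyclic. -/
/-- Concrete model of the adversary graph: colors agree iff membership in
`{(1,1), q}` agrees. -/
def Gq (q : Fin 3 × Fin 3) : SimpleGraph (Fin 3 × Fin 3) where
  Adj x y := Nat.dist x.1.val y.1.val + Nat.dist x.2.val y.2.val = 1 ∧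
    ((x = (1,1) ∨ x = q) ↔ (y = (1,1) ∨ y = q))
  symm := by
    constructor
    intro x y ⟨h, hc⟩
    refine ⟨?_, hc.symm⟩
    rwa [Nat.dist_comm y.1.val, Nat.dist_comm y.2.val]
  loopless := by
    constructor
    intro x ⟨h, _⟩
    simp [Nat.dist_self] at h

instance (q : Fin 3 × Fin 3) : DecidableRel (Gq q).Adj := fun _ _ => instDecidableAnd

/-- `G` with the edge `s(v,w)` deleted, with decidable adjacency. -/
def Del {V : Type*} [DecidableEq V] (G : SimpleGraph V) [DecidableRel G.Adj] (v w : V) :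
    SimpleGraph V where
  Adj a b := G.Adj a b ∧ s(a,b) ≠ s(v,w)
  symm := by
    constructor
    intro a b ⟨h1, h2⟩
    exact ⟨h1.symm, by rwa [Sym2.eq_swap]⟩
  loopless := ⟨fun a ⟨h, _⟩ => G.loopless.irrefl a h⟩

instance {V : Type*} [DecidableEq V] (G : SimpleGraph V) [DecidableRel G.Adj] (v w : V) :
    DecidableRel (Del G v w).Adj := fun a b => inferInstanceAs (Decidable (G.Adj a b ∧ s(a,b) ≠ s(v,w)))

lemma del_eq {V : Type*} [DecidableEq V] (G : SimpleGraph V) [DecidableRel G.Adj] (v w : V) :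
    Del G v w = G \ SimpleGraph.fromEdgeSet {s(v,w)} := by
  ext a b
  simp only [Del, SimpleGraph.sdiff_adj, SimpleGraph.fromEdgeSet_adj,
    Set.mem_singleton_iff, not_and]
  constructor
  · rintro ⟨h, h2⟩
    exact ⟨h, fun hc _ => h2 hc⟩
  · rintro ⟨h, h2⟩
    exact ⟨h, fun hc => h2 hc (G.ne_of_adj h)⟩

set_option maxHeartbeats 8000000 in
lemma key : ∀ q : Fin 3 × Fin 3, q ≠ (1,1) →
    ∀ v w : Fin 3 × Fin 3, (Gq q).Adj v w → ¬(Del (Gq q) v w).Reachable v w := by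
  decide +kernel


/-- Acyclic completion of the `3 × 3` adversary: center `b`, one boundary
cell `b`, the rest `a` — the grid graph is acyclic. -/
theorem stmt_5 {α : Type*} (a b : α) (hab : a ≠ b) (q : Fin 3 × Fin 3)
    (hq : q ≠ (1, 1)) (c : Fin 3 × Fin 3 → α)
    (hcen : c (1, 1) = b) (hqb : c q = b)
    (hrest : ∀ r : Fin 3 × Fin 3, r ≠ (1, 1) → r ≠ q → c r = a) :
    (gridGraph c).IsAcyclic := by
  have hc : ∀ x : Fin 3 × Fin 3, c x = if (x = (1,1) ∨ x = q) then b else a := by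
    intro x
    split
    · rename_i h; rcases h with h | h <;> subst h <;> assumption
    · rename_i h; push_neg at h; exact hrest x h.1 h.2
  have hG : gridGraph c = Gq q := by
    ext x y
    refine and_congr_right fun _ => ?_
    rw [hc x, hc y]
    split_ifs with h1 h2 h2
    · exact iff_of_true rfl (iff_of_true h1 h2)
    · exact iff_of_false (fun h => hab h.symm) (fun h => h2 (h.mp h1))
    · exact iff_of_false hab (fun h => h1 (h.mpr h2))
    · exact iff_of_true rfl (iff_of_false h1 h2)
  rw [hG, SimpleGraph.isAcyclic_iff_forall_adj_isBridge]
  intro v w h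
  rw [SimpleGraph.isBridge_iff]
  have hk := key q hq v w h
  rw [del_eq] at hk
  exact hk
end

section
/- Let a, b : α with a ≠ b, let q be any cell of the 3 × 3 grid with q ≠ (1,1), and let c : Fin 3 × Fin 3 → α be the coloring with c q = b and c r = a for every cell r ≠ q (in particular c (1,1) = a). Then the grid graph of c contains a cycle. -/
lemma four_cycle {V : Type*} {G : SimpleGraph V} {v1 v2 v3 v4 : V}
    (h12 : G.Adj v1 v2) (h23 : G.Adj v2 v3) (h34 : G.Adj v3 v4) (h41 : G.Adj v4 v1)
    (h13 : v1 ≠ v3) (h24 : v2 ≠ v4) : ¬ G.IsAcyclic := by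
  intro hac
  refine hac (SimpleGraph.Walk.cons h12 (SimpleGraph.Walk.cons h23
    (SimpleGraph.Walk.cons h34 h41.toWalk))) ?_
  have n12 := h12.ne; have n23 := h23.ne; have n34 := h34.ne; have n41 := h41.ne
  simp [SimpleGraph.Walk.isCycle_def, SimpleGraph.Walk.isTrail_def, Sym2.eq,
    Sym2.rel_iff', List.Nodup]
  aesop

/-- Cyclic completion of Case 2 of the `3 × 3` adversary: one boundary cell
`b`, all other cells (including the center) `a` — the grid graph has a cycle. -/
theorem stmt_6 {α : Type*} (a b : α) (hab : a ≠ b) (q : Fin 3 × Fin 3)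
    (hq : q ≠ (1, 1)) (c : Fin 3 × Fin 3 → α)
    (hqb : c q = b) (hrest : ∀ r : Fin 3 × Fin 3, r ≠ q → c r = a) :
    ¬ (gridGraph c).IsAcyclic := by
  fin_cases q <;>
    first
    | exact absurd rfl hq
    | exact four_cycle (G := gridGraph c)
        (v1 := (1,1)) (v2 := (1,2)) (v3 := (2,2)) (v4 := (2,1))
        ⟨by decide, by rw [hrest _ (by decide), hrest _ (by decide)]⟩
        ⟨by decide, by rw [hrest _ (by decide), hrest _ (by decide)]⟩
        ⟨by decide, by rw [hrest _ (by decide), hrest _ (by decide)]⟩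
        ⟨by decide, by rw [hrest _ (by decide), hrest _ (by decide)]⟩
        (by decide) (by decide)
    | exact four_cycle (G := gridGraph c)
        (v1 := (0,0)) (v2 := (0,1)) (v3 := (1,1)) (v4 := (1,0))
        ⟨by decide, by rw [hrest _ (by decide), hrest _ (by decide)]⟩
        ⟨by decide, by rw [hrest _ (by decide), hrest _ (by decide)]⟩
        ⟨by decide, by rw [hrest _ (by decide), hrest _ (by decide)]⟩
        ⟨by decide, by rw [hrest _ (by decide), hrest _ (by decide)]⟩
        (by decide) (by decide)
end

section
/- For every cell p of the 3 × 3 grid, there exist two colorings c₀, c₁ : Fin 3 × Fin 3 → Fin 2 that agree on every cell other than p, such that the grid graph of c₀ contains a cycle and the grid graph of c₁ is acyclic. -/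
open SimpleGraph

instance gridGraphDec {m n : ℕ} {α : Type*} [DecidableEq α] (c : Fin m × Fin n → α) :
    DecidableRel (gridGraph c).Adj := fun _ _ => inferInstanceAs (Decidable (_ ∧ _))


instance fromEdgeSetSingletonDec {V : Type*} [DecidableEq V] (e : Sym2 V) :
    DecidableRel (fromEdgeSet {e}).Adj := fun a b =>
  decidable_of_iff (s(a, b) = e ∧ a ≠ b) (by simp [fromEdgeSet_adj])

section Reach
variable {V : Type*} [Fintype V] [DecidableEq V] (G : SimpleGraph V) [DecidableRel G.Adj]

def reachSet (u : V) : ℕ → Finset V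
  | 0 => {u}
  | k + 1 =>
      let S := reachSet u k
      S ∪ Finset.univ.filter (fun w => ∃ x ∈ S, G.Adj x w)

lemma reachSet_mono {u : V} {k : ℕ} : reachSet G u k ⊆ reachSet G u (k + 1) := by
  intro x hx
  simp only [reachSet]
  exact Finset.mem_union_left _ hx

lemma reachSet_mono' {u : V} {k l : ℕ} (h : k ≤ l) : reachSet G u k ⊆ reachSet G u l := by
  induction l with
  | zero => simpa [Nat.le_zero.mp h]
  | succ n ih =>
      rcases Nat.lt_or_ge k (n+1) with h' | h'
      · exact (ih (Nat.lt_succ_iff.mp h')).trans (reachSet_mono G)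
      · have : k = n + 1 := le_antisymm h h'
        subst this; exact Finset.Subset.refl _

lemma reachSet_succ_of_adj {u x w : V} {k : ℕ} (hx : x ∈ reachSet G u k) (h : G.Adj x w) :
    w ∈ reachSet G u (k + 1) := by
  simp only [reachSet]
  exact Finset.mem_union_right _ (Finset.mem_filter.mpr ⟨Finset.mem_univ _, x, hx, h⟩)

lemma walk_mem_reachSet {u w : V} (p : G.Walk u w) : w ∈ reachSet G u p.length := by
  induction p using SimpleGraph.Walk.concatRec with
  | Hnil => simp [reachSet]
  | Hconcat q h ih =>
      rw [SimpleGraph.Walk.length_concat]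
      exact reachSet_succ_of_adj G ih h

lemma not_reachable_of_reachSet {u w : V} (h : w ∉ reachSet G u (Fintype.card V)) :
    ¬ G.Reachable u w := by
  intro hr
  refine hr.elim_path fun p => ?_
  exact h (reachSet_mono' G p.2.length_lt.le (walk_mem_reachSet G p.1))

lemma isAcyclic_of_reachSet
    (h : ∀ v w, G.Adj v w →
      w ∉ reachSet (G \ fromEdgeSet {s(v, w)}) v (Fintype.card V)) :
    G.IsAcyclic := by
  rw [isAcyclic_iff_forall_adj_isBridge]
  intro v w hvw
  exact isBridge_iff.mpr (by have := not_reachable_of_reachSet (G \ fromEdgeSet {s(v, w)}) (h v w hvw); exact this)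

end Reach


lemma notAcyclic_of_cycle4 {V : Type*} {G : SimpleGraph V} {a b c d : V}
    (hab : G.Adj a b) (hbc : G.Adj b c) (hcd : G.Adj c d) (hda : G.Adj d a)
    (h1 : a ≠ b) (h2 : a ≠ c) (h3 : a ≠ d) (h4 : b ≠ c) (h5 : b ≠ d) (h6 : c ≠ d) :
    ¬ G.IsAcyclic := by
  intro h
  refine h (Walk.cons hab (Walk.cons hbc (Walk.cons hcd (Walk.cons hda Walk.nil)))) ?_
  rw [Walk.isCycle_def, Walk.isTrail_def]
  refine ⟨?_, by simp, ?_⟩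
  · simp only [Walk.edges_cons, Walk.edges_nil, List.nodup_cons, List.mem_cons,
      List.not_mem_nil, or_false, List.nodup_nil, and_true, Sym2.eq, Sym2.rel_iff',
      Prod.mk.injEq, Prod.swap_prod_mk]
    tauto
  · simp only [Walk.support_cons, Walk.support_nil, List.tail_cons, List.nodup_cons,
      List.mem_cons, List.not_mem_nil, or_false, List.nodup_nil, and_true]
    tauto


def cA0 : Fin 3 × Fin 3 → Fin 2 := fun x => (![![0,0,1],![0,0,1],![1,1,1]] : Matrix (Fin 3) (Fin 3) (Fin 2)) x.1 x.2
def cB0 : Fin 3 × Fin 3 → Fin 2 := fun x => (![![1,0,1],![0,0,1],![1,1,1]] : Matrix (Fin 3) (Fin 3) (Fin 2)) x.1 x.2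

set_option maxHeartbeats 1000000 in
lemma acyc0 : (gridGraph cB0).IsAcyclic :=
  isAcyclic_of_reachSet _ (by decide)

def cA1 : Fin 3 × Fin 3 → Fin 2 := fun x => (![![0,0,0],![0,0,0],![1,1,1]] : Matrix (Fin 3) (Fin 3) (Fin 2)) x.1 x.2
def cB1 : Fin 3 × Fin 3 → Fin 2 := fun x => (![![0,1,0],![0,0,0],![1,1,1]] : Matrix (Fin 3) (Fin 3) (Fin 2)) x.1 x.2

set_option maxHeartbeats 1000000 in
lemma acyc1 : (gridGraph cB1).IsAcyclic :=
  isAcyclic_of_reachSet _ (by decide)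

def cA2 : Fin 3 × Fin 3 → Fin 2 := fun x => (![![1,0,0],![1,0,0],![1,1,1]] : Matrix (Fin 3) (Fin 3) (Fin 2)) x.1 x.2
def cB2 : Fin 3 × Fin 3 → Fin 2 := fun x => (![![1,0,1],![1,0,0],![1,1,1]] : Matrix (Fin 3) (Fin 3) (Fin 2)) x.1 x.2

set_option maxHeartbeats 1000000 in
lemma acyc2 : (gridGraph cB2).IsAcyclic :=
  isAcyclic_of_reachSet _ (by decide)

def cA3 : Fin 3 × Fin 3 → Fin 2 := fun x => (![![0,0,1],![0,0,1],![0,0,1]] : Matrix (Fin 3) (Fin 3) (Fin 2)) x.1 x.2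
def cB3 : Fin 3 × Fin 3 → Fin 2 := fun x => (![![0,0,1],![1,0,1],![0,0,1]] : Matrix (Fin 3) (Fin 3) (Fin 2)) x.1 x.2

set_option maxHeartbeats 1000000 in
lemma acyc3 : (gridGraph cB3).IsAcyclic :=
  isAcyclic_of_reachSet _ (by decide)

def cA4 : Fin 3 × Fin 3 → Fin 2 := fun x => (![![0,0,1],![0,0,1],![0,0,1]] : Matrix (Fin 3) (Fin 3) (Fin 2)) x.1 x.2
def cB4 : Fin 3 × Fin 3 → Fin 2 := fun x => (![![0,0,1],![0,1,1],![0,0,1]] : Matrix (Fin 3) (Fin 3) (Fin 2)) x.1 x.2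

set_option maxHeartbeats 1000000 in
lemma acyc4 : (gridGraph cB4).IsAcyclic :=
  isAcyclic_of_reachSet _ (by decide)

def cA5 : Fin 3 × Fin 3 → Fin 2 := fun x => (![![1,0,0],![1,0,0],![1,0,0]] : Matrix (Fin 3) (Fin 3) (Fin 2)) x.1 x.2
def cB5 : Fin 3 × Fin 3 → Fin 2 := fun x => (![![1,0,0],![1,0,1],![1,0,0]] : Matrix (Fin 3) (Fin 3) (Fin 2)) x.1 x.2

set_option maxHeartbeats 1000000 in
lemma acyc5 : (gridGraph cB5).IsAcyclic :=
  isAcyclic_of_reachSet _ (by decide)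

def cA6 : Fin 3 × Fin 3 → Fin 2 := fun x => (![![1,1,1],![0,0,1],![0,0,1]] : Matrix (Fin 3) (Fin 3) (Fin 2)) x.1 x.2
def cB6 : Fin 3 × Fin 3 → Fin 2 := fun x => (![![1,1,1],![0,0,1],![1,0,1]] : Matrix (Fin 3) (Fin 3) (Fin 2)) x.1 x.2

set_option maxHeartbeats 1000000 in
lemma acyc6 : (gridGraph cB6).IsAcyclic :=
  isAcyclic_of_reachSet _ (by decide)

def cA7 : Fin 3 × Fin 3 → Fin 2 := fun x => (![![1,1,1],![0,0,0],![0,0,0]] : Matrix (Fin 3) (Fin 3) (Fin 2)) x.1 x.2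
def cB7 : Fin 3 × Fin 3 → Fin 2 := fun x => (![![1,1,1],![0,0,0],![0,1,0]] : Matrix (Fin 3) (Fin 3) (Fin 2)) x.1 x.2

set_option maxHeartbeats 1000000 in
lemma acyc7 : (gridGraph cB7).IsAcyclic :=
  isAcyclic_of_reachSet _ (by decide)

def cA8 : Fin 3 × Fin 3 → Fin 2 := fun x => (![![1,1,1],![1,0,0],![1,0,0]] : Matrix (Fin 3) (Fin 3) (Fin 2)) x.1 x.2
def cB8 : Fin 3 × Fin 3 → Fin 2 := fun x => (![![1,1,1],![1,0,0],![1,0,1]] : Matrix (Fin 3) (Fin 3) (Fin 2)) x.1 x.2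

set_option maxHeartbeats 1000000 in
lemma acyc8 : (gridGraph cB8).IsAcyclic :=
  isAcyclic_of_reachSet _ (by decide)

/-- Static core of Lemma 2 (the `3 × 3` adversary): every cell `p` can be the
deciding cell. -/
theorem stmt_8 (p : Fin 3 × Fin 3) :
    ∃ c₀ c₁ : Fin 3 × Fin 3 → Fin 2,
      (∀ x, x ≠ p → c₀ x = c₁ x) ∧
      ¬ (gridGraph c₀).IsAcyclic ∧ (gridGraph c₁).IsAcyclic := by
  fin_cases p
  · exact ⟨cA0, cB0, by decide,
      notAcyclic_of_cycle4 (a := ((0 : Fin 3), (0 : Fin 3))) (b := ((0 : Fin 3), (1 : Fin 3))) (c := ((1 : Fin 3), (1 : Fin 3))) (d := ((1 : Fin 3), (0 : Fin 3)))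
        (by decide) (by decide) (by decide) (by decide) (by decide)
        (by decide) (by decide) (by decide) (by decide) (by decide),
      acyc0⟩
  · exact ⟨cA1, cB1, by decide,
      notAcyclic_of_cycle4 (a := ((0 : Fin 3), (0 : Fin 3))) (b := ((0 : Fin 3), (1 : Fin 3))) (c := ((1 : Fin 3), (1 : Fin 3))) (d := ((1 : Fin 3), (0 : Fin 3)))
        (by decide) (by decide) (by decide) (by decide) (by decide)
        (by decide) (by decide) (by decide) (by decide) (by decide),
      acyc1⟩
  · exact ⟨cA2, cB2, by decide,
      notAcyclic_of_cycle4 (a := ((0 : Fin 3), (1 : Fin 3))) (b := ((0 : Fin 3), (2 : Fin 3))) (c := ((1 : Fin 3), (2 : Fin 3))) (d := ((1 : Fin 3), (1 : Fin 3)))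
        (by decide) (by decide) (by decide) (by decide) (by decide)
        (by decide) (by decide) (by decide) (by decide) (by decide),
      acyc2⟩
  · exact ⟨cA3, cB3, by decide,
      notAcyclic_of_cycle4 (a := ((0 : Fin 3), (0 : Fin 3))) (b := ((0 : Fin 3), (1 : Fin 3))) (c := ((1 : Fin 3), (1 : Fin 3))) (d := ((1 : Fin 3), (0 : Fin 3)))
        (by decide) (by decide) (by decide) (by decide) (by decide)
        (by decide) (by decide) (by decide) (by decide) (by decide),
      acyc3⟩
  · exact ⟨cA4, cB4, by decide,
      notAcyclic_of_cycle4 (a := ((0 : Fin 3), (0 : Fin 3))) (b := ((0 : Fin 3), (1 : Fin 3))) (c := ((1 : Fin 3), (1 : Fin 3))) (d := ((1 : Fin 3), (0 : Fin 3)))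
        (by decide) (by decide) (by decide) (by decide) (by decide)
        (by decide) (by decide) (by decide) (by decide) (by decide),
      acyc4⟩
  · exact ⟨cA5, cB5, by decide,
      notAcyclic_of_cycle4 (a := ((0 : Fin 3), (1 : Fin 3))) (b := ((0 : Fin 3), (2 : Fin 3))) (c := ((1 : Fin 3), (2 : Fin 3))) (d := ((1 : Fin 3), (1 : Fin 3)))
        (by decide) (by decide) (by decide) (by decide) (by decide)
        (by decide) (by decide) (by decide) (by decide) (by decide),
      acyc5⟩
  · exact ⟨cA6, cB6, by decide,
      notAcyclic_of_cycle4 (a := ((1 : Fin 3), (0 : Fin 3))) (b := ((1 : Fin 3), (1 : Fin 3))) (c := ((2 : Fin 3), (1 : Fin 3))) (d := ((2 : Fin 3), (0 : Fin 3)))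
        (by decide) (by decide) (by decide) (by decide) (by decide)
        (by decide) (by decide) (by decide) (by decide) (by decide),
      acyc6⟩
  · exact ⟨cA7, cB7, by decide,
      notAcyclic_of_cycle4 (a := ((1 : Fin 3), (0 : Fin 3))) (b := ((1 : Fin 3), (1 : Fin 3))) (c := ((2 : Fin 3), (1 : Fin 3))) (d := ((2 : Fin 3), (0 : Fin 3)))
        (by decide) (by decide) (by decide) (by decide) (by decide)
        (by decide) (by decide) (by decide) (by decide) (by decide),
      acyc7⟩
  · exact ⟨cA8, cB8, by decide,
      notAcyclic_of_cycle4 (a := ((1 : Fin 3), (1 : Fin 3))) (b := ((1 : Fin 3), (2 : Fin 3))) (c := ((2 : Fin 3), (2 : Fin 3))) (d := ((2 : Fin 3), (1 : Fin 3)))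
        (by decide) (by decide) (by decide) (by decide) (by decide)
        (by decide) (by decide) (by decide) (by decide) (by decide),
      acyc8⟩
end

section
/- Let a, b : α with a ≠ b, and let c : Fin 3 × Fin 2 → α (3 rows, 2 columns) be the coloring with c (0,1) = b, c (2,1) = b, and c r = a for every other cell r. Then the grid graph of c is acyclic. -/
/-- A "star" graph (every edge touches a fixed center `z`) is acyclic. -/
lemma star_isAcyclic {V : Type*} {G : SimpleGraph V} (z : V)
    (hstar : ∀ x y, G.Adj x y → x = z ∨ y = z) : G.IsAcyclic := by
  intro v w hw
  have h3 := hw.three_le_length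
  cases w with
  | nil => simp at h3
  | cons h₁ p₁ =>
    cases p₁ with
    | nil => simp at h3
    | cons h₂ p₂ =>
      cases p₂ with
      | nil => simp at h3
      | cons h₃ q =>
        rename_i x₁ x₂ x₃
        have hnd := hw.2
        simp only [SimpleGraph.Walk.support_cons, List.tail_cons, List.nodup_cons] at hnd
        obtain ⟨hx1, hx2, hq⟩ := hnd
        have hvq : v ∈ q.support := SimpleGraph.Walk.end_mem_support q
        have hx3q : x₃ ∈ q.support := SimpleGraph.Walk.start_mem_support q
        rcases hstar _ _ h₂ with h | h
        · subst h
          rcases hstar _ _ h₃ with h' | h'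
          · exact hx1 (h' ▸ List.mem_cons_self)
          · subst h'
            exact hx1 (List.mem_cons_of_mem _ hx3q)
        · subst h
          rcases hstar _ _ h₁ with h' | h'
          · subst h'
            exact hx2 hvq
          · exact hx1 (h' ▸ List.mem_cons_self)

/-- Acyclic completion used by the `2 × 3` adversary (3 rows, 2 columns):
`b` at `(0,1)` and `(2,1)`, the rest `a` — both `2 × 2` blocks are broken. -/
theorem stmt_10 {α : Type*} (a b : α) (hab : a ≠ b) (c : Fin 3 × Fin 2 → α)
    (h01 : c (0, 1) = b) (h21 : c (2, 1) = b)
    (hrest : ∀ r : Fin 3 × Fin 2, r ≠ (0, 1) → r ≠ (2, 1) → c r = a) :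
    (gridGraph c).IsAcyclic := by
  have key : ∀ (r s : Fin 3 × Fin 2), r ≠ (0,1) → r ≠ (2,1) →
      (s = (0,1) ∨ s = (2,1)) → c r ≠ c s := by
    intro r s hr1 hr2 hs h
    apply hab
    rw [← hrest r hr1 hr2, h]
    rcases hs with h' | h' <;> subst h' <;> assumption
  apply star_isAcyclic ((1 : Fin 3), (0 : Fin 2))
  rintro ⟨x1, x2⟩ ⟨y1, y2⟩ ⟨hd, hc⟩
  by_contra hne
  push_neg at hne
  obtain ⟨hx, hy⟩ := hne
  fin_cases x1 <;> fin_cases x2 <;> fin_cases y1 <;> fin_cases y2 <;>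
    first
      | exact absurd hd (by decide)
      | exact hx (by decide)
      | exact hy (by decide)
      | exact key _ _ (by decide) (by decide) (by decide) hc
      | exact key _ _ (by decide) (by decide) (by decide) hc.symm
end
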